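/- (Mixture entropy bound for Rényi-1/2 entropy) Let ρ̄ = ∑_{λ} φ_λ |φ_λ⟩⟨φ_λ| be a mixture of (not necessarily orthogonal) pure states with probability weights φ_λ. Then the Rényi entropy of order 1/2 of the density matrix ρ̄ is at most the classical Rényi-1/2 entropy of the weights: H_{1/2}(ρ̄) ≤ H_{1/2}(φ), where H_{1/2}(ρ) = 2 log₂ Tr√ρ for a density matrix and H_{1/2}(p) = 2 log₂ ∑_λ √p_λ for a probability vector. -/

import Mathlib

/-!
Write `ρ̄ = M * Mᴴ`, where `M j l = √(φ l) * v l j` is the coefficient matrix of the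
purification `∑ l, √(φ l) |v l⟩ ⊗ |l⟩`. Since `M * Mᴴ` and `Mᴴ * M` share their nonzero
eigenvalues, `Tr √ρ̄ = Tr √(Mᴴ * M)`. The Gram matrix `G = Mᴴ * M` has diagonal `φ`, and
dephasing only increases `Tr √`: `(√G) l l ≤ √(G l l)` because `G l l = ∑ k, ‖(√G) k l‖ ^ 2`.
Hence `Tr √ρ̄ ≤ ∑ l, √(φ l)`, and `log₂` is monotone (with `log₂ 0 = 0` harmless, as the
right-hand side is at least `1`).
-/

open Matrix
open scoped ComplexOrder

/-- Positive semidefinite square root (for PSD inputs): `(AᴴA)^{1/4}`, which equals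
`√A` whenever `A` is positive semidefinite. -/
noncomputable def hermSqrtOld {n : Type*} [Fintype n] [DecidableEq n]
    {A : Matrix n n ℂ} (hA : A.IsHermitian) : Matrix n n ℂ :=
  (hA.eigenvectorUnitary : Matrix n n ℂ) * diagonal ((↑) ∘ (√·) ∘ hA.eigenvalues) *
    (star hA.eigenvectorUnitary : Matrix n n ℂ)

theorem hermSqrtOld_isHermitian {n : Type*} [Fintype n] [DecidableEq n]
    {A : Matrix n n ℂ} (hA : A.IsHermitian) : (hermSqrtOld hA).IsHermitian := by
  unfold hermSqrtOld
  have hD : (diagonal (((↑) ∘ (√·) ∘ hA.eigenvalues) : n → ℂ)).IsHermitian := by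
    refine isHermitian_diagonal_of_self_adjoint _ ?_
    ext i
    simp
  simpa [star_eq_conjTranspose] using
    isHermitian_mul_mul_conjTranspose (hA.eigenvectorUnitary : Matrix n n ℂ) hD

noncomputable def msqrt {n : Type*} [Fintype n] [DecidableEq n]
    (A : Matrix n n ℂ) : Matrix n n ℂ :=
  hermSqrtOld (hermSqrtOld_isHermitian (Matrix.posSemidef_conjTranspose_mul_self A).1)

/-- Rényi entropy of order `1/2` of a density matrix: `H_{1/2}(ρ) = 2 log₂ Tr √ρ`. -/
noncomputable def renyiHalf {n : Type*} [Fintype n] [DecidableEq n]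
    (ρ : Matrix n n ℂ) : ℝ :=
  2 * Real.logb 2 (((msqrt ρ).trace).re)

open scoped MatrixOrder

lemma Real.one_le_sum_sqrt {ι : Type*} [Fintype ι] {p : ι → ℝ} (hp : ∀ i, 0 ≤ p i)
    (hp1 : ∑ i, p i = 1) : 1 ≤ ∑ i, √(p i) := by
  rw [← hp1]
  refine Finset.sum_le_sum fun i _ => Real.le_sqrt_self_iff.mpr ?_
  rw [← hp1]
  exact Finset.single_le_sum (fun j _ => hp j) (Finset.mem_univ i)

lemma Real.logb_le_logb_of_nonneg_of_one_le {b x y : ℝ} (hb : 1 < b) (hx : 0 ≤ x)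
    (hxy : x ≤ y) (hy : 1 ≤ y) : Real.logb b x ≤ Real.logb b y := by
  rcases hx.eq_or_lt with rfl | hx
  · rw [Real.logb_zero]
    exact Real.logb_nonneg hb hy
  · exact Real.logb_le_logb_of_le hb hx hxy

lemma RCLike.ofReal_eq_sqrt_mul_sqrt {𝕜 : Type*} [RCLike 𝕜] {x : ℝ} (hx : 0 ≤ x) :
    (x : 𝕜) = (√x : 𝕜) * (√x : 𝕜) := by
  rw [← RCLike.ofReal_mul, Real.mul_self_sqrt hx]

namespace Matrix

variable {m n ι 𝕜 : Type*} [RCLike 𝕜]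

section Purification

noncomputable def purificationMatrix (φ : ι → ℝ) (v : ι → n → 𝕜) : Matrix n ι 𝕜 :=
  of fun j l => (√(φ l) : 𝕜) * v l j

variable {φ : ι → ℝ} (v : ι → n → 𝕜)

lemma purificationMatrix_mul_conjTranspose [Fintype ι] (hφ : ∀ l, 0 ≤ φ l) :
    purificationMatrix φ v * (purificationMatrix φ v)ᴴ =
      ∑ l, φ l • vecMulVec (v l) (fun j => star (v l j)) := by
  ext i j
  simp only [purificationMatrix, mul_apply, conjTranspose_apply, of_apply, sum_apply,
    smul_apply, vecMulVec_apply]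
  refine Finset.sum_congr rfl fun l _ => ?_
  rw [star_mul', RCLike.star_def, RCLike.conj_ofReal, RCLike.real_smul_eq_coe_mul,
    RCLike.ofReal_eq_sqrt_mul_sqrt (hφ l)]
  ring

lemma conjTranspose_purificationMatrix_mul_apply_self [Fintype n] {l : ι} (hφ : 0 ≤ φ l) :
    ((purificationMatrix φ v)ᴴ * purificationMatrix φ v) l l =
      ((φ l * ∑ j, ‖v l j‖ ^ 2 : ℝ) : 𝕜) := by
  simp only [purificationMatrix, mul_apply, conjTranspose_apply, of_apply, star_mul',
    RCLike.star_def, RCLike.conj_ofReal]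
  rw [RCLike.ofReal_mul, RCLike.ofReal_sum, Finset.mul_sum,
    RCLike.ofReal_eq_sqrt_mul_sqrt hφ]
  refine Finset.sum_congr rfl fun j _ => ?_
  rw [RCLike.ofReal_pow, ← RCLike.conj_mul]
  ring

end Purification

section SquareRoot

variable [Fintype n]

lemma IsHermitian.norm_apply_self_sq_le {S : Matrix n n 𝕜} (hS : S.IsHermitian) (i : n) :
    ‖S i i‖ ^ 2 ≤ RCLike.re ((S * S) i i) := by
  have hdiag : RCLike.re ((S * S) i i) = ∑ k, ‖S k i‖ ^ 2 := by
    simp only [mul_apply, ← hS.apply i, RCLike.star_def, RCLike.conj_mul, map_sum,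
      ← RCLike.ofReal_pow, RCLike.ofReal_re]
  rw [hdiag]
  exact Finset.single_le_sum (fun k _ => sq_nonneg ‖S k i‖) (Finset.mem_univ i)

variable [DecidableEq n]

lemma hermSqrtOld_eq_cfc {A : Matrix n n ℂ} (hA : A.IsHermitian) :
    hermSqrtOld hA = cfc Real.sqrt A := by
  rw [hA.cfc_eq, IsHermitian.cfc, Unitary.conjStarAlgAut_apply]
  rfl

lemma msqrt_eq_cfc_sqrt {A : Matrix n n ℂ} (hA : A.PosSemidef) :
    msqrt A = cfc Real.sqrt A := by
  have hA' : 0 ≤ A := nonneg_iff_posSemidef.mpr hA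
  have hAA : cfc Real.sqrt (A * A) = A := by
    rw [← cfcₙ_eq_cfc, ← CFC.sqrt_eq_real_sqrt (A * A), CFC.sqrt_mul_self A]
  rw [msqrt, hermSqrtOld_eq_cfc, hermSqrtOld_eq_cfc, hA.1.eq, hAA]

lemma cfc_sqrt_mul_self {A : Matrix n n 𝕜} (hA : A.PosSemidef) :
    cfc Real.sqrt A * cfc Real.sqrt A = A := by
  rw [← cfc_mul Real.sqrt Real.sqrt A]
  conv_rhs => rw [← cfc_id' ℝ A]
  refine cfc_congr fun x hx => Real.mul_self_sqrt ?_
  exact spectrum_nonneg_of_nonneg (nonneg_iff_posSemidef.mpr hA) hx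

lemma re_trace_cfc_sqrt_nonneg {A : Matrix n n 𝕜} : 0 ≤ RCLike.re (cfc Real.sqrt A).trace := by
  have hS : (cfc Real.sqrt A).PosSemidef :=
    nonneg_iff_posSemidef.mp (cfc_nonneg fun x _ => Real.sqrt_nonneg x)
  exact (RCLike.nonneg_iff.mp hS.trace_nonneg).1

lemma re_trace_cfc_sqrt_le_sum_sqrt_diag {G : Matrix n n 𝕜} (hG : G.PosSemidef) :
    RCLike.re (cfc Real.sqrt G).trace ≤ ∑ i, √(RCLike.re (G i i)) := by
  have hS : (cfc Real.sqrt G).IsHermitian := cfc_predicate Real.sqrt G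
  rw [trace, map_sum]
  refine Finset.sum_le_sum fun i _ => ?_
  calc RCLike.re (cfc Real.sqrt G i i) ≤ ‖cfc Real.sqrt G i i‖ := RCLike.re_le_norm _
    _ = √(‖cfc Real.sqrt G i i‖ ^ 2) := (Real.sqrt_sq (norm_nonneg _)).symm
    _ ≤ √(RCLike.re (G i i)) := by
      gcongr
      simpa only [cfc_sqrt_mul_self hG] using hS.norm_apply_self_sq_le i

lemma IsHermitian.trace_cfc {A : Matrix n n 𝕜} (hA : A.IsHermitian) (f : ℝ → ℝ) :
    (cfc f A).trace = (A.charpoly.roots.map fun z => (f (RCLike.re z) : 𝕜)).sum := by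
  rw [hA.cfc_eq, IsHermitian.cfc, Unitary.conjStarAlgAut_apply, trace_mul_cycle,
    Unitary.star_mul_self_of_mem hA.eigenvectorUnitary.2, Matrix.one_mul, trace_diagonal,
    hA.roots_charpoly_eq_eigenvalues, Multiset.map_map]
  simp

/-- `X ^ #n * χ(M * Mᴴ) = X ^ #m * χ(Mᴴ * M)` (`charpoly_mul_comm'`), so the two spectra differ
only in the multiplicity of `0`, which `f` does not see. -/
lemma trace_cfc_mul_conjTranspose_comm [Fintype m] [DecidableEq m] (M : Matrix m n 𝕜)
    {f : ℝ → ℝ} (hf : f 0 = 0) : (cfc f (M * Mᴴ)).trace = (cfc f (Mᴴ * M)).trace := by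
  have hroots := congrArg Polynomial.roots (charpoly_mul_comm' M Mᴴ)
  rw [Polynomial.roots_mul, Polynomial.roots_mul, Polynomial.roots_X_pow,
    Polynomial.roots_X_pow] at hroots
  · have hsum := congrArg (fun s => (s.map fun z => (f (RCLike.re z) : 𝕜)).sum) hroots
    simp only [Multiset.map_add, Multiset.sum_add, Multiset.map_nsmul, Multiset.sum_nsmul,
      Multiset.map_singleton, Multiset.sum_singleton, RCLike.zero_re, hf, RCLike.ofReal_zero,
      smul_zero, zero_add] at hsum
    rw [(isHermitian_mul_conjTranspose_self M).trace_cfc,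
      (isHermitian_conjTranspose_mul_self M).trace_cfc, hsum]
  all_goals exact mul_ne_zero (pow_ne_zero _ Polynomial.X_ne_zero) (charpoly_monic _).ne_zero

end SquareRoot

end Matrix

/-- Mixture entropy bound for the Rényi-1/2 entropy: for a mixture
`ρ̄ = ∑_λ φ_λ |φ_λ⟩⟨φ_λ|` of (not necessarily orthogonal) pure states with probability
weights `φ_λ`, `H_{1/2}(ρ̄) ≤ H_{1/2}(φ) = 2 log₂ ∑_λ √φ_λ`. -/
theorem renyi_half_mixture_bound {d K : ℕ}
    (φ : Fin K → ℝ) (hφ : ∀ l, 0 ≤ φ l) (hφ1 : ∑ l, φ l = 1)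
    (v : Fin K → Fin d → ℂ) (hv : ∀ l, ∑ j, Complex.normSq (v l j) = 1) :
    renyiHalf (∑ l, φ l • Matrix.vecMulVec (v l) (fun j => star (v l j)))
      ≤ 2 * Real.logb 2 (∑ l, Real.sqrt (φ l)) := by
  set M := purificationMatrix φ v
  have hgram : ∀ l, RCLike.re ((Mᴴ * M) l l) = φ l := fun l => by
    simp [M, conjTranspose_purificationMatrix_mul_apply_self v (hφ l),
      ← Complex.normSq_eq_norm_sq, hv l]
  have htrace : ((msqrt (M * Mᴴ)).trace).re = RCLike.re (cfc Real.sqrt (Mᴴ * M)).trace := by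
    rw [msqrt_eq_cfc_sqrt (posSemidef_self_mul_conjTranspose M),
      trace_cfc_mul_conjTranspose_comm M Real.sqrt_zero]
    rfl
  have hle := re_trace_cfc_sqrt_le_sum_sqrt_diag (posSemidef_conjTranspose_mul_self M)
  simp only [hgram] at hle
  rw [renyiHalf, ← purificationMatrix_mul_conjTranspose v hφ, htrace]
  gcongr 2 * ?_
  exact Real.logb_le_logb_of_nonneg_of_one_le one_lt_two re_trace_cfc_sqrt_nonneg hle
    (Real.one_le_sum_sqrt hφ hφ1)
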